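/- Let z₀ ∈ ℂ \ {0} and let (αₙ)ₙ≥₀ be a sequence of complex numbers with |αₙ − z₀| ≤ |z₀|/2 for all n. Suppose (uₙ) is a sequence in ℂ satisfying u_{n+1} = uₙ − αₙ + εₙ where |εₙ| ≤ M/|uₙ| for some constant M. Then there exists K > 0 such that if Re(u₀ · conj(z₀)) < −K, then Re(uₙ · conj(z₀)) < −K for all n and |uₙ| → ∞. -/

import Mathlib

/-!
`Re(u · conj z₀)` is the real inner product `⟪z₀, u⟫` on `ℂ`, and the argument works in any real
inner product space. Since every `αₙ` lies in the disc of radius `|z₀|/2`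
about `z₀`, `⟪z₀, αₙ⟫ ≥ |z₀|²/2`. If `⟪z₀, uₙ⟫ < -K` then `|uₙ| |z₀| > K`, so the error
contributes at most `|M| |z₀|² / K ≤ |z₀|²/4` once `K ≥ 4|M|`. Hence `⟪z₀, uₙ⟫` drops by at
least `|z₀|²/4` per step, stays below `-K`, and tends to `-∞`, which forces `|uₙ| → ∞`.
-/

open Filter
open scoped InnerProductSpace

section EscapeEstimate

variable {E : Type*} [NormedAddCommGroup E] [InnerProductSpace ℝ E]

theorem half_sq_norm_le_inner_of_norm_sub_le {z a : E} (ha : ‖a - z‖ ≤ ‖z‖ / 2) :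
    ‖z‖ ^ 2 / 2 ≤ ⟪z, a⟫_ℝ := by
  have hsplit : ⟪z, a⟫_ℝ = ⟪z, a - z⟫_ℝ + ‖z‖ ^ 2 := by
    rw [inner_sub_right, real_inner_self_eq_norm_sq]; ring
  have hlow : -(‖z‖ * ‖a - z‖) ≤ ⟪z, a - z⟫_ℝ :=
    neg_le_of_abs_le (abs_real_inner_le_norm z (a - z))
  nlinarith [norm_nonneg z]

theorem inner_le_quarter_sq_norm_of_norm_le_div {z u ε : E} {M K : ℝ} (hK : 4 * |M| ≤ K)
    (hu : ⟪z, u⟫_ℝ < -K) (hε : ‖ε‖ ≤ M / ‖u‖) : ⟪z, ε⟫_ℝ ≤ ‖z‖ ^ 2 / 4 := by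
  have hzu : K < ‖z‖ * ‖u‖ := by
    linarith [neg_le_of_abs_le (abs_real_inner_le_norm z u)]
  have hMu : 4 * |M| < ‖z‖ * ‖u‖ := hK.trans_lt hzu
  have hu0 : 0 < ‖u‖ := pos_of_mul_pos_right (by linarith [abs_nonneg M]) (norm_nonneg z)
  have hε' : ‖ε‖ * ‖u‖ ≤ |M| := by
    rw [← le_div_iff₀ hu0]; exact hε.trans (div_le_div_of_nonneg_right (le_abs_self M) hu0.le)
  calc ⟪z, ε⟫_ℝ ≤ ‖z‖ * ‖ε‖ := real_inner_le_norm z ε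
    _ ≤ ‖z‖ ^ 2 / 4 := by nlinarith [norm_nonneg z, norm_nonneg ε]

theorem inner_step_le {z u a ε : E} {M K : ℝ} (ha : ‖a - z‖ ≤ ‖z‖ / 2) (hK : 4 * |M| ≤ K)
    (hu : ⟪z, u⟫_ℝ < -K) (hε : ‖ε‖ ≤ M / ‖u‖) :
    ⟪z, u - a + ε⟫_ℝ ≤ ⟪z, u⟫_ℝ - ‖z‖ ^ 2 / 4 := by
  rw [inner_add_right, inner_sub_right]
  linarith [half_sq_norm_le_inner_of_norm_sub_le ha,
    inner_le_quarter_sq_norm_of_norm_le_div hK hu hε]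

theorem inner_le_sub_mul_of_step {z : E} {α u : ℕ → E} {M K : ℝ}
    (hα : ∀ n, ‖α n - z‖ ≤ ‖z‖ / 2) (hK : 4 * |M| ≤ K)
    (hu : ∀ n, ∃ ε : E, u (n + 1) = u n - α n + ε ∧ ‖ε‖ ≤ M / ‖u n‖)
    (h0 : ⟪z, u 0⟫_ℝ < -K) (n : ℕ) :
    ⟪z, u n⟫_ℝ ≤ ⟪z, u 0⟫_ℝ - n * (‖z‖ ^ 2 / 4) := by
  induction n with
  | zero => simp
  | succ n ih =>
    obtain ⟨ε, hstep, hε⟩ := hu n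
    have hn : ⟪z, u n⟫_ℝ < -K := by nlinarith [sq_nonneg ‖z‖]
    rw [hstep]
    push_cast
    linarith [inner_step_le (hα n) hK hn hε]

theorem tendsto_atBot_of_le_sub_mul {x : ℕ → ℝ} {c : ℝ} (hc : 0 < c)
    (h : ∀ n, x n ≤ x 0 - n * c) : Tendsto x atTop atBot := by
  refine tendsto_atBot_mono h ?_
  simp only [sub_eq_add_neg, ← mul_neg]
  exact tendsto_atBot_add_const_left _ _
    (tendsto_natCast_atTop_atTop.atTop_mul_const_of_neg (neg_neg_of_pos hc))

theorem tendsto_norm_atTop_of_inner_tendsto_atBot {ι : Type*} {l : Filter ι} {z : E}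
    (hz : z ≠ 0) {u : ι → E} (h : Tendsto (fun i => ⟪z, u i⟫_ℝ) l atBot) :
    Tendsto (fun i => ‖u i‖) l atTop := by
  have hz' : 0 < ‖z‖ := norm_pos_iff.mpr hz
  refine tendsto_atTop_mono (fun i => ?_) ((tendsto_neg_atBot_atTop.comp h).atTop_div_const hz')
  rw [Function.comp_apply, div_le_iff₀ hz', mul_comm]
  exact neg_le.mpr (neg_le_of_abs_le (abs_real_inner_le_norm z (u i)))

theorem inner_lt_and_tendsto_norm_atTop {z : E} (hz : z ≠ 0) {α u : ℕ → E} {M K : ℝ}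
    (hα : ∀ n, ‖α n - z‖ ≤ ‖z‖ / 2) (hK : 4 * |M| ≤ K)
    (hu : ∀ n, ∃ ε : E, u (n + 1) = u n - α n + ε ∧ ‖ε‖ ≤ M / ‖u n‖)
    (h0 : ⟪z, u 0⟫_ℝ < -K) :
    (∀ n, ⟪z, u n⟫_ℝ < -K) ∧ Tendsto (fun n => ‖u n‖) atTop atTop := by
  have hdecr := inner_le_sub_mul_of_step hα hK hu h0
  have hc : 0 < ‖z‖ ^ 2 / 4 := by positivity
  refine ⟨fun n => ?_, tendsto_norm_atTop_of_inner_tendsto_atBot hz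
    (tendsto_atBot_of_le_sub_mul hc hdecr)⟩
  nlinarith [hdecr n, (Nat.cast_nonneg n : (0 : ℝ) ≤ n)]

end EscapeEstimate

/-- escape estimate.  If `|αₙ − z₀| ≤ |z₀|/2` for all `n`, and `(uₙ)`
satisfies `u_{n+1} = uₙ − αₙ + εₙ` with `|εₙ| ≤ M/|uₙ|`, then there is `K > 0` such
that `Re(u₀ conj z₀) < −K` implies `Re(uₙ conj z₀) < −K` for all `n` and `|uₙ| → ∞`. -/
theorem stmt2 (z₀ : ℂ) (hz₀ : z₀ ≠ 0) (α : ℕ → ℂ)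
    (hα : ∀ n, ‖α n - z₀‖ ≤ ‖z₀‖ / 2) (M : ℝ) :
    ∃ K > 0, ∀ u : ℕ → ℂ,
      (∀ n, ∃ ε : ℂ, u (n + 1) = u n - α n + ε ∧
        ‖ε‖ ≤ M / ‖u n‖) →
      (u 0 * (starRingEnd ℂ) z₀).re < -K →
      (∀ n, (u n * (starRingEnd ℂ) z₀).re < -K) ∧
      Filter.Tendsto (fun n => ‖u n‖) Filter.atTop Filter.atTop := by
  refine ⟨4 * |M| + 1, by positivity, fun u hu h0 => ?_⟩
  simp only [← Complex.inner] at h0 ⊢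
  exact inner_lt_and_tendsto_norm_atTop hz₀ hα (by linarith) hu h0
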